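/- Let S be a commutative unital ring whose additive group is torsion-free (for example S = ℤ or S = ℤ_p), and let p be a prime that is not invertible in S. If there exist groups B and C with B finite such that the p-reduced Heisenberg group Hr_p(S) is isomorphic as a group to the direct product B × C, then B is the trivial group. -/

import Mathlib

/-- The Heisenberg group over a commutative unital ring `S`: the underlying set is
`S × S × S` with multiplication `(x,y,z)·(x',y',z') = (x+x', y+y', z+xy'+z')`. -/
@[ext]
structure Heis (S : Type*) [CommRing S] where
  x : S
  y : S
  z : S

namespace Heis

variable {S : Type*} [CommRing S]

instance : Mul (Heis S) := ⟨fun a b => ⟨a.x + b.x, a.y + b.y, a.z + a.x * b.y + b.z⟩⟩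
instance : One (Heis S) := ⟨⟨0, 0, 0⟩⟩
instance : Inv (Heis S) := ⟨fun a => ⟨-a.x, -a.y, a.x * a.y - a.z⟩⟩

@[simp] lemma mul_x (a b : Heis S) : (a * b).x = a.x + b.x := rfl
@[simp] lemma mul_y (a b : Heis S) : (a * b).y = a.y + b.y := rfl
@[simp] lemma mul_z (a b : Heis S) : (a * b).z = a.z + a.x * b.y + b.z := rfl
@[simp] lemma one_x : (1 : Heis S).x = 0 := rfl
@[simp] lemma one_y : (1 : Heis S).y = 0 := rfl
@[simp] lemma one_z : (1 : Heis S).z = 0 := rfl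
@[simp] lemma inv_x (a : Heis S) : a⁻¹.x = -a.x := rfl
@[simp] lemma inv_y (a : Heis S) : a⁻¹.y = -a.y := rfl
@[simp] lemma inv_z (a : Heis S) : a⁻¹.z = a.x * a.y - a.z := rfl

instance : Group (Heis S) where
  mul_assoc a b c := by ext <;> simp <;> ring
  one_mul a := by ext <;> simp
  mul_one a := by ext <;> simp
  inv_mul_cancel a := by ext <;> simp <;> ring

end Heis

/-- The central subgroup `{(0,0,ps) : s ∈ S}` of the Heisenberg group `H(S)`. -/
def pCenter (p : ℕ) (S : Type*) [CommRing S] : Subgroup (Heis S) where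
  carrier := {a | a.x = 0 ∧ a.y = 0 ∧ ∃ s : S, a.z = p * s}
  mul_mem' := by
    rintro a b ⟨hax, hay, s, hs⟩ ⟨hbx, hby, t, ht⟩
    refine ⟨by rw [Heis.mul_x, hax, hbx, add_zero],
      by rw [Heis.mul_y, hay, hby, add_zero], s + t, ?_⟩
    rw [Heis.mul_z, hs, ht, hax]; ring
  one_mem' := ⟨rfl, rfl, 0, by simp⟩
  inv_mem' := by
    rintro a ⟨hax, hay, s, hs⟩
    exact ⟨by rw [Heis.inv_x, hax, neg_zero], by rw [Heis.inv_y, hay, neg_zero],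
      -s, by rw [Heis.inv_z, hax, hs]; ring⟩

instance pCenter.normal (p : ℕ) (S : Type*) [CommRing S] : (pCenter p S).Normal := by
  constructor
  intro n hn g
  obtain ⟨hx, hy, hz⟩ := hn
  have hgn : g * n * g⁻¹ = n := by ext <;> simp [hx, hy] <;> ring
  rw [hgn]; exact ⟨hx, hy, hz⟩

/-- The `p`-reduced Heisenberg group over `S`: the quotient of `H(S)` by the central
subgroup `{(0,0,ps) : s ∈ S}`. -/
abbrev HrP (p : ℕ) (S : Type*) [CommRing S] : Type _ := Heis S ⧸ pCenter p S

/-- The subgroup `{(0,0,s) : s ∈ S}` of `H(S)`. -/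
def zSubgroup (S : Type*) [CommRing S] : Subgroup (Heis S) where
  carrier := {a | a.x = 0 ∧ a.y = 0}
  mul_mem' := by
    rintro a b ⟨hax, hay⟩ ⟨hbx, hby⟩
    exact ⟨by rw [Heis.mul_x, hax, hbx, add_zero], by rw [Heis.mul_y, hay, hby, add_zero]⟩
  one_mem' := ⟨rfl, rfl⟩
  inv_mem' := by
    rintro a ⟨hax, hay⟩
    exact ⟨by rw [Heis.inv_x, hax, neg_zero], by rw [Heis.inv_y, hay, neg_zero]⟩

/-- The subgroup `K = {(0,0,[s]) : s ∈ S}` of the `p`-reduced Heisenberg group `Hr_p(S)`. -/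
def Ksub (p : ℕ) (S : Type*) [CommRing S] : Subgroup (HrP p S) :=
  (zSubgroup S).map (QuotientGroup.mk' (pCenter p S))

instance Ksub.normal (p : ℕ) (S : Type*) [CommRing S] : (Ksub p S).Normal := by
  constructor
  intro n hn g
  obtain ⟨a, ⟨hax, hay⟩, rfl⟩ := hn
  obtain ⟨b, rfl⟩ := QuotientGroup.mk'_surjective (pCenter p S) g
  refine ⟨b * a * b⁻¹, ⟨?_, ?_⟩, by simp⟩
  · simp [hax]
  · simp [hay]

/-
Under the isomorphism, the finite factor `B` consists of torsion elements of `Hr_p(S)`. Since `S`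
is torsion-free, a torsion element of `Hr_p(S)` has vanishing `x`- and `y`-coordinates, so `B`
lands in `K = {(0,0,[s])}`. Every element of `K` is central, so `B` is abelian; and every
`(0,0,[s])` is the commutator of `(1,0,0)` and `(0,s,0)`, so every element of `B` is a commutator
in the abelian group `B`, hence trivial.
-/

open scoped commutatorElement

section ProdFactor

variable {G B C : Type*} [Group G] [Group B] [Group C]

lemma commute_of_mulEquiv_prod_of_mem_center (e : G ≃* B × C)
    (hB : ∀ b, e.symm (b, 1) ∈ Subgroup.center G) (b₁ b₂ : B) : Commute b₁ b₂ := by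
  have h := congrArg e (Subgroup.mem_center_iff.mp (hB b₂) (e.symm (b₁, 1)))
  simp only [map_mul, MulEquiv.apply_symm_apply, Prod.mk_mul_mk, mul_one] at h
  exact (Prod.ext_iff.mp h).1

lemma subsingleton_of_mulEquiv_prod {K : Subgroup G} (e : G ≃* B × C)
    (hK : K ≤ Subgroup.center G) (hKc : (K : Set G) ⊆ commutatorSet G)
    (hB : ∀ b, e.symm (b, 1) ∈ K) : Subsingleton B := by
  have hcomm := commute_of_mulEquiv_prod_of_mem_center e fun b => hK (hB b)
  refine subsingleton_of_forall_eq 1 fun b => ?_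
  obtain ⟨g, h, hgh⟩ := hKc (hB b)
  have hb : b = ⁅(e g).1, (e h).1⁆ := by
    simpa [commutatorElement_def] using congrArg (fun x => (e x).1) hgh.symm
  rw [hb]
  exact commutatorElement_eq_one_iff_commute.mpr (hcomm _ _)

end ProdFactor

namespace Heis

variable {S : Type*} [CommRing S]

@[simp] lemma pow_x (a : Heis S) (n : ℕ) : (a ^ n).x = n • a.x := by
  induction n with
  | zero => simp
  | succ n ih => rw [pow_succ, mul_x, ih, succ_nsmul]

@[simp] lemma pow_y (a : Heis S) (n : ℕ) : (a ^ n).y = n • a.y := by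
  induction n with
  | zero => simp
  | succ n ih => rw [pow_succ, mul_y, ih, succ_nsmul]

end Heis

section Ksub

variable (p : ℕ) (S : Type*) [CommRing S]

lemma Ksub_le_center : Ksub p S ≤ Subgroup.center (HrP p S) := by
  rintro _ ⟨a, ⟨hx, hy⟩, rfl⟩
  refine Subgroup.mem_center_iff.mpr fun g => ?_
  obtain ⟨c, rfl⟩ := QuotientGroup.mk'_surjective (pCenter p S) g
  rw [← map_mul, ← map_mul]
  congr 1
  ext <;> simp only [Heis.mul_x, Heis.mul_y, Heis.mul_z, hx, hy] <;> ring

lemma Ksub_subset_commutatorSet : (Ksub p S : Set (HrP p S)) ⊆ commutatorSet (HrP p S) := by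
  rintro _ ⟨a, ⟨hx, hy⟩, rfl⟩
  refine ⟨QuotientGroup.mk' _ ⟨1, 0, 0⟩, QuotientGroup.mk' _ ⟨0, a.z, 0⟩, ?_⟩
  rw [← map_commutatorElement]
  congr 1
  ext <;> simp [commutatorElement_def, hx, hy]

variable {p S}

lemma mem_Ksub_of_isOfFinOrder (hS : ∀ s : S, s ≠ 0 → ¬IsOfFinAddOrder s) {g : HrP p S}
    (hg : IsOfFinOrder g) : g ∈ Ksub p S := by
  have torsion_eq_zero {s : S} {n : ℕ} (hn : 0 < n) (hs : n • s = 0) : s = 0 := by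
    by_contra hs₀
    exact hS s hs₀ (isOfFinAddOrder_iff_nsmul_eq_zero.mpr ⟨n, hn, hs⟩)
  obtain ⟨n, hn, hgn⟩ := isOfFinOrder_iff_pow_eq_one.mp hg
  obtain ⟨a, rfl⟩ := QuotientGroup.mk'_surjective (pCenter p S) g
  rw [← map_pow, QuotientGroup.mk'_apply, QuotientGroup.eq_one_iff] at hgn
  obtain ⟨hx, hy, -⟩ := hgn
  rw [Heis.pow_x] at hx
  rw [Heis.pow_y] at hy
  exact ⟨a, ⟨torsion_eq_zero hn hx, torsion_eq_zero hn hy⟩, rfl⟩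

end Ksub

theorem HrP_not_finite_times_anything_general
    (p : ℕ) (S : Type*) [CommRing S]
    (hS : ∀ g : S, g ≠ 0 → ¬IsOfFinAddOrder g)
    (B C : Type*) [Group B] [Group C] [Finite B]
    (e : HrP p S ≃* B × C) :
    Subsingleton B :=
  subsingleton_of_mulEquiv_prod e (Ksub_le_center p S) (Ksub_subset_commutatorSet p S) fun b =>
    mem_Ksub_of_isOfFinOrder hS <|
      e.symm.toMonoidHom.isOfFinOrder ((isOfFinOrder_of_finite b).prod_mk IsOfFinOrder.one)

/-- Let `S` be a commutative unital ring whose additive group is torsion-free,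
and `p` a prime not invertible in `S`.  If `Hr_p(S) ≅ B × C` with `B` finite, then `B` is
trivial. -/
theorem HrP_not_finite_times_anything
    (p : ℕ) (hp : p.Prime) (S : Type*) [CommRing S]
    (hS : ∀ g : S, g ≠ 0 → ¬IsOfFinAddOrder g) (hpS : ¬ IsUnit (p : S))
    (B C : Type*) [Group B] [Group C] [Finite B]
    (e : HrP p S ≃* B × C) :
    Subsingleton B :=
  HrP_not_finite_times_anything_general p S hS B C e
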